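/- Let A be a commutative ring, G a finitely generated A-module. The set of primes p ∈ Spec A at which G_p is a free A_p-module of rank n and at which a fixed map φ : F → G is surjective after localization is open in Spec A, provided F and G are finitely presented. -/

import Mathlib

/-!
The set is the intersection of two open sets. The locus where `φ_p` is surjective is the
complement of the support of the finitely generated module `coker φ`, which is closed. The
locus where `G_p` is free of rank `n` is a fibre of the rank function on the free locus of `G`;
for finitely presented `G` the free locus is open and the rank is locally constant on it.
-/

open Module

variable {A F G : Type*} [CommRing A] [AddCommGroup F] [AddCommGroup G] [Module A F] [Module A G]

lemma LinearMap.isOpen_setOf_localizedMap_atPrime_surjective [Module.Finite A G]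
    (φ : F →ₗ[A] G) :
    IsOpen {p : PrimeSpectrum A |
      Function.Surjective (LocalizedModule.map p.asIdeal.primeCompl φ)} := by
  simp_rw [φ.localizedMap_surjective_iff_subsingleton_localized_coker, ← notMem_support_iff]
  exact isClosed_support.isOpen_compl

lemma Module.nonempty_basis_fin_localizedModule_iff [Module.Finite A G] (n : ℕ)
    (p : PrimeSpectrum A) :
    Nonempty (Basis (Fin n) (Localization.AtPrime p.asIdeal)
        (LocalizedModule p.asIdeal.primeCompl G)) ↔
      p ∈ freeLocus A G ∧ rankAtStalk G p = n := by
  rw [mem_freeLocus, rankAtStalk]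
  constructor
  · rintro ⟨b⟩
    exact ⟨.of_basis b, by rw [finrank_eq_card_basis b, Fintype.card_fin]⟩
  · rintro ⟨hfree, hrank⟩
    exact ⟨(Free.chooseBasis _ _).reindex (Fintype.equivFinOfCardEq
      ((finrank_eq_card_chooseBasisIndex _ _).symm.trans hrank))⟩

lemma Module.isOpen_setOf_nonempty_basis_fin_localizedModule [FinitePresentation A G] (n : ℕ) :
    IsOpen {p : PrimeSpectrum A | Nonempty (Basis (Fin n) (Localization.AtPrime p.asIdeal)
        (LocalizedModule p.asIdeal.primeCompl G))} := by
  have hfiber := isOpen_freeLocus.isOpenMap_subtype_val _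
    ((isLocallyConstant_rankAtStalk_freeLocus (R := A) (M := G)).isOpen_fiber n)
  convert hfiber using 1
  ext p
  simp [nonempty_basis_fin_localizedModule_iff, and_comm]

theorem stmt_17_general (A : Type) [CommRing A] (F G : Type) [AddCommGroup F] [AddCommGroup G]
    [Module A F] [Module A G]
    (hG : Module.FinitePresentation A G) (φ : F →ₗ[A] G) (n : ℕ) :
    IsOpen {p : PrimeSpectrum A |
      Nonempty (Module.Basis (Fin n) (Localization.AtPrime p.asIdeal)
        (LocalizedModule p.asIdeal.primeCompl G)) ∧
      Function.Surjective (LocalizedModule.map p.asIdeal.primeCompl φ)} :=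
  (isOpen_setOf_nonempty_basis_fin_localizedModule n).inter
    φ.isOpen_setOf_localizedMap_atPrime_surjective

/-- for finitely presented modules `F`, `G` over a commutative ring `A` and
an `A`-linear map `φ : F → G`, the set of primes `p` at which `G_p` is free of rank `n`
over `A_p` and at which `φ` becomes surjective after localization is open in `Spec A`. -/
theorem stmt_17 (A : Type) [CommRing A] (F G : Type) [AddCommGroup F] [AddCommGroup G]
    [Module A F] [Module A G] (hF : Module.FinitePresentation A F)
    (hG : Module.FinitePresentation A G) (φ : F →ₗ[A] G) (n : ℕ) :
    IsOpen {p : PrimeSpectrum A |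
      Nonempty (Module.Basis (Fin n) (Localization.AtPrime p.asIdeal)
        (LocalizedModule p.asIdeal.primeCompl G)) ∧
      Function.Surjective (LocalizedModule.map p.asIdeal.primeCompl φ)} :=
  stmt_17_general A F G hG φ n
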